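/- Let m > 1 be an integer and let s and t be distinct positive divisors of m with s⁴ < m and t⁴ < m. Let I_s = (s, γ_m) and I_t = (t, γ_m) be the fractional ideals of ℤ[γ_m] generated by {s, γ_m} and {t, γ_m} respectively. Then I_s² and I_t² are not homothetic: there is no α ∈ K_m^× with α·I_s² = I_t². In particular, the ideal classes of the squares I_s² for s a divisor of m with s⁴ < m are pairwise distinct, and there are at least ω(m) − 3 of them, where ω(m) is the number of distinct prime divisors of m. -/

import Mathlib

/-- For `m > 1`, `γ_m = (1 + √(1-4m))/2 = (1 + i·√(4m-1))/2 ∈ ℂ`, a root of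
`x² - x + m` generating the imaginary quadratic field `K_m = ℚ(√(1-4m)) ⊆ ℂ`. -/
noncomputable def gammaC (m : ℕ) : ℂ :=
  (1 + Real.sqrt (4 * m - 1) * Complex.I) / 2

/-- The order `ℤ[γ_m]`. -/
noncomputable def orderC (m : ℕ) : Subalgebra ℤ ℂ := Algebra.adjoin ℤ {gammaC m}

/-- The fractional ideal `I_s = (s, γ_m)` of `ℤ[γ_m]`, as a `ℤ[γ_m]`-submodule. -/
noncomputable def idealC (m s : ℕ) : Submodule (orderC m) ℂ :=
  Submodule.span (orderC m) {(s : ℂ), gammaC m}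

/-!
For `u ∣ m` the ideal `I_u²` is the lattice `ℤ u² + ℤ γ²`, because `γ² = γ - m` and
`u γ = (m / u) u² + u γ²`. When `u⁴ < m` we have `Im γ² = √(4m - 1) / 2 > u²`, so the only nonzero
vectors of this lattice of norm at most `u²` are `±u²`. A homothety `α I_s² = I_t²` therefore sends
`s²` to `±t²`, and comparing imaginary parts in `α γ² ∈ I_t²` gives `s² ∣ t²`; by symmetry `s = t`.

At most three prime factors `p` of `m` satisfy `m ≤ p⁴`: the least `p` of four of them, with the
other three `q, r, w`, would give `p⁴ < p q r w ≤ m`.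
-/

open Complex Submodule
open scoped Pointwise

section Gamma

variable {m : ℕ}

lemma gammaC_sq (hm : 0 < m) : gammaC m ^ 2 = gammaC m - m := by
  have h : (0 : ℝ) ≤ 4 * m - 1 := by
    have : (1 : ℝ) ≤ m := by exact_mod_cast hm
    linarith
  have hsq : ((√(4 * m - 1) : ℝ) : ℂ) ^ 2 = 4 * m - 1 := by
    rw [← ofReal_pow, Real.sq_sqrt h]; push_cast; ring
  unfold gammaC
  linear_combination (-1 / 4 : ℂ) * hsq + ((√(4 * m - 1) : ℝ) : ℂ) ^ 2 / 4 * I_sq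

lemma im_gammaC_sq (hm : 0 < m) : (gammaC m ^ 2).im = √(4 * m - 1) / 2 := by
  rw [gammaC_sq hm]
  simp [gammaC]

lemma sq_lt_im_gammaC_sq {u : ℕ} (hu : u ^ 4 < m) : (u : ℝ) ^ 2 < (gammaC m ^ 2).im := by
  rw [im_gammaC_sq ((Nat.zero_le _).trans_lt hu), lt_div_iff₀ two_pos,
    Real.lt_sqrt (by positivity)]
  have : (u : ℝ) ^ 4 + 1 ≤ m := by exact_mod_cast hu
  nlinarith

end Gamma

section Lattice

variable {r : ℝ} {τ x : ℂ}

lemma exists_im_eq_of_mem_span_pair (hx : x ∈ span ℤ {(r : ℂ), τ}) :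
    ∃ b : ℤ, x.im = b * τ.im := by
  obtain ⟨a, b, rfl⟩ := mem_span_pair.1 hx
  exact ⟨b, by simp⟩

lemma eq_zero_or_eq_or_eq_neg_of_norm_le (hr : 0 < r) (hτ : r < |τ.im|)
    (hx : x ∈ span ℤ {(r : ℂ), τ}) (hxr : ‖x‖ ≤ r) : x = 0 ∨ x = r ∨ x = -r := by
  obtain ⟨a, b, rfl⟩ := mem_span_pair.1 hx
  simp only [zsmul_eq_mul] at hxr ⊢
  obtain rfl : b = 0 := by
    by_contra hb
    have hb1 : |τ.im| ≤ |(b : ℝ)| * |τ.im| :=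
      le_mul_of_one_le_left (abs_nonneg _) (by exact_mod_cast Int.one_le_abs hb)
    have him : (a * (r : ℂ) + b * τ).im = b * τ.im := by simp
    have := abs_im_le_norm (a * (r : ℂ) + b * τ)
    rw [him, abs_mul] at this
    linarith
  have ha : |(a : ℝ)| ≤ 1 := by
    simpa [norm_mul, abs_of_pos hr, hr] using hxr
  have : |a| ≤ 1 := by exact_mod_cast ha
  rcases abs_le.1 this with ⟨h1, h2⟩
  interval_cases a <;> simp

lemma le_norm_of_mem_span_pair (hr : 0 < r) (hτ : r < |τ.im|)
    (hx : x ∈ span ℤ {(r : ℂ), τ}) (hx0 : x ≠ 0) : r ≤ ‖x‖ := by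
  by_contra! hlt
  rcases eq_zero_or_eq_or_eq_neg_of_norm_le hr hτ hx hlt.le with h | h | h
  · exact hx0 h
  all_goals simp [h, abs_of_pos hr] at hlt

end Lattice

noncomputable def sqLattice (m u : ℕ) : Submodule ℤ ℂ := span ℤ {(u : ℂ) ^ 2, gammaC m ^ 2}

section SqLattice

variable {m u : ℕ} {x : ℂ}

lemma sqLattice_eq_span_ofReal :
    sqLattice m u = span ℤ {(((u : ℝ) ^ 2 : ℝ) : ℂ), gammaC m ^ 2} := by
  simp [sqLattice]

lemma gammaC_sq_of_dvd (hm : 0 < m) {v : ℕ} (hv : m = u * v) :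
    gammaC m ^ 2 = gammaC m - u * v := by
  rw [gammaC_sq hm, hv]; push_cast; ring

lemma gammaC_mul_mem_sqLattice (hm : 0 < m) (hu : u ∣ m) (hx : x ∈ sqLattice m u) :
    gammaC m * x ∈ sqLattice m u := by
  obtain ⟨v, hv⟩ := hu
  obtain ⟨a, b, rfl⟩ := mem_span_pair.1 hx
  refine mem_span_pair.2 ⟨a * u * v - b * v ^ 2, a * u ^ 2 + b * (1 - u * v), ?_⟩
  simp only [zsmul_eq_mul]
  push_cast
  linear_combination (a * u ^ 2 - b * gammaC m - b * u * v) * gammaC_sq_of_dvd hm hv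

lemma mul_mem_sqLattice (hm : 0 < m) (hu : u ∣ m) {c : ℂ} (hc : c ∈ orderC m)
    (hx : x ∈ sqLattice m u) : c * x ∈ sqLattice m u := by
  induction hc using Algebra.adjoin_induction generalizing x with
  | mem c hc => rw [Set.mem_singleton_iff.1 hc]; exact gammaC_mul_mem_sqLattice hm hu hx
  | algebraMap n => simpa [← zsmul_eq_mul] using (sqLattice m u).smul_mem n hx
  | add c d _ _ hc hd => rw [add_mul]; exact add_mem (hc hx) (hd hx)
  | mul c d _ _ hc hd => rw [mul_assoc]; exact hc (hd hx)

lemma mem_idealC_mul_self_iff (hm : 0 < m) (hu : u ∣ m) :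
    x ∈ idealC m u * idealC m u ↔ x ∈ sqLattice m u := by
  constructor
  · intro hx
    rw [idealC, span_mul_span] at hx
    induction hx using Submodule.span_induction with
    | mem y hy =>
      obtain ⟨p, hp, q, hq, rfl⟩ := Set.mem_mul.1 hy
      have huγ : (u : ℂ) * gammaC m ∈ sqLattice m u := by
        obtain ⟨v, hv⟩ := hu
        refine mem_span_pair.2 ⟨v, u, ?_⟩
        simp only [zsmul_eq_mul]
        push_cast
        linear_combination (u : ℂ) * gammaC_sq_of_dvd hm hv
      simp only [Set.mem_insert_iff, Set.mem_singleton_iff] at hp hq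
      rcases hp with rfl | rfl <;> rcases hq with rfl | rfl
      · exact subset_span (by simp [sq])
      · exact huγ
      · rwa [mul_comm]
      · exact subset_span (by simp [sq])
    | zero => exact zero_mem _
    | add y z _ _ hy hz => exact add_mem hy hz
    | smul c y _ hy => exact mul_mem_sqLattice hm hu c.2 hy
  · intro hx
    have hu : (u : ℂ) ∈ idealC m u := subset_span (Set.mem_insert _ _)
    have hγ : gammaC m ∈ idealC m u := subset_span (Set.mem_insert_of_mem _ rfl)
    obtain ⟨a, b, rfl⟩ := mem_span_pair.1 hx
    rw [sq, sq]
    exact add_mem (zsmul_mem (mul_mem_mul hu hu) a) (zsmul_mem (mul_mem_mul hγ hγ) b)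

end SqLattice

section Homothety

variable {m s t : ℕ} {α : ℂ}

lemma exists_mul_sq_eq_of_smul_sqLattice_eq (hs0 : 0 < s) (ht0 : 0 < t)
    (hs4 : s ^ 4 < m) (ht4 : t ^ 4 < m) (h : α • (sqLattice m s : Set ℂ) = sqLattice m t) :
    ∃ ε : ℤ, ε * ε = 1 ∧ α * (s : ℂ) ^ 2 = ε * (t : ℂ) ^ 2 := by
  have mem_t : ∀ {x}, x ∈ sqLattice m t ↔ ∃ y ∈ sqLattice m s, α * y = x := by
    intro x; rw [← SetLike.mem_coe, ← h]; rfl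
  have hs2 : (0 : ℝ) < (s : ℝ) ^ 2 := by positivity
  have ht2 : (0 : ℝ) < (t : ℝ) ^ 2 := by positivity
  have ht2' : (t : ℂ) ^ 2 ≠ 0 := by simp [ht0.ne']
  obtain ⟨z, hz, hzt⟩ := mem_t.1 (subset_span (Set.mem_insert _ _))
  have hz0 : z ≠ 0 := by rintro rfl; exact ht2' (by simpa using hzt.symm)
  have hα : ‖α‖ * (s : ℝ) ^ 2 ≤ (t : ℝ) ^ 2 := calc
    ‖α‖ * (s : ℝ) ^ 2 ≤ ‖α‖ * ‖z‖ := by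
      gcongr
      exact le_norm_of_mem_span_pair hs2 ((sq_lt_im_gammaC_sq hs4).trans_le (le_abs_self _))
        (sqLattice_eq_span_ofReal ▸ hz) hz0
    _ = (t : ℝ) ^ 2 := by rw [← norm_mul, hzt]; simp
  have hαs := mem_t.2 ⟨_, subset_span (Set.mem_insert _ _), rfl⟩
  rcases eq_zero_or_eq_or_eq_neg_of_norm_le ht2
    ((sq_lt_im_gammaC_sq ht4).trans_le (le_abs_self _)) (sqLattice_eq_span_ofReal ▸ hαs)
    (by simpa using hα) with h0 | h1 | h1
  · refine absurd ?_ ht2'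
    rw [← hzt, (mul_eq_zero.1 h0).resolve_right (by simp [hs0.ne']), zero_mul]
  · exact ⟨1, rfl, by simpa using h1⟩
  · exact ⟨-1, rfl, by simpa using h1⟩

lemma dvd_of_smul_sqLattice_eq (hs0 : 0 < s) (ht0 : 0 < t)
    (hs4 : s ^ 4 < m) (ht4 : t ^ 4 < m) (h : α • (sqLattice m s : Set ℂ) = sqLattice m t) :
    s ∣ t := by
  obtain ⟨ε, hε, hαs⟩ := exists_mul_sq_eq_of_smul_sqLattice_eq hs0 ht0 hs4 ht4 h
  have hαγ : α * gammaC m ^ 2 ∈ sqLattice m t := by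
    rw [← SetLike.mem_coe, ← h]
    exact Set.smul_mem_smul_set (subset_span (Set.mem_insert_of_mem _ rfl))
  obtain ⟨b, hb⟩ := exists_im_eq_of_mem_span_pair (sqLattice_eq_span_ofReal ▸ hαγ)
  have him : (s : ℝ) ^ 2 * b * (gammaC m ^ 2).im = ε * (t : ℝ) ^ 2 * (gammaC m ^ 2).im := by
    have e : (((s : ℝ) ^ 2 : ℝ) : ℂ) * (α * gammaC m ^ 2) =
        ((ε * (t : ℝ) ^ 2 : ℝ) : ℂ) * gammaC m ^ 2 := by
      push_cast
      linear_combination gammaC m ^ 2 * hαs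
    simpa only [im_ofReal_mul, hb, mul_assoc] using congrArg im e
  have hst : (s : ℤ) ^ 2 * b = ε * t ^ 2 := by
    have hs2 : (0 : ℝ) < (s : ℝ) ^ 2 := by positivity
    exact_mod_cast mul_right_cancel₀ (hs2.trans (sq_lt_im_gammaC_sq hs4)).ne' him
  have : (s : ℤ) ^ 2 ∣ (t : ℤ) ^ 2 := ⟨ε * b, by linear_combination -ε * hst - t ^ 2 * hε⟩
  exact (Nat.pow_dvd_pow_iff two_ne_zero).1 (by exact_mod_cast this)

end Homothety

open Finset in
lemma card_primeFactors_filter_le_pow_four_le_three (m : ℕ) :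
    #{p ∈ m.primeFactors | m ≤ p ^ 4} ≤ 3 := by
  set B := {p ∈ m.primeFactors | m ≤ p ^ 4}
  by_contra! hB
  have hne : B.Nonempty := card_pos.1 (by omega)
  obtain ⟨p, hpB, hpmin⟩ := B.exists_min_image id hne
  obtain ⟨S, hS, hcard⟩ := exists_subset_card_eq (s := B.erase p) (n := 3)
    (by rw [card_erase_of_mem hpB]; omega)
  have hSB : S ⊆ B := hS.trans (erase_subset _ _)
  have hpS : p ∉ S := fun h => (mem_erase.1 (hS h)).1 rfl
  have hdvd : p * ∏ q ∈ S, q ∣ m := by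
    have := (prod_dvd_prod_of_subset _ _ (fun q => q)
      ((insert_subset hpB hSB).trans (filter_subset _ _))).trans (Nat.prod_primeFactors_dvd m)
    rwa [prod_insert hpS] at this
  have hm0 : m ≠ 0 := (Nat.mem_primeFactors.1 (mem_filter.1 hpB).1).2.2
  have hp0 : 0 < p := Nat.pos_of_mem_primeFactors (mem_filter.1 hpB).1
  have hlt : p ^ 3 < ∏ q ∈ S, q := calc
    p ^ 3 = ∏ _q ∈ S, p := by rw [prod_const, hcard]
    _ < ∏ q ∈ S, q := prod_lt_prod_of_nonempty (fun _ _ => hp0)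
      (fun q hq => (hpmin q (hSB hq)).lt_of_ne (by rintro rfl; exact hpS hq))
      (card_pos.1 (by omega))
  have hpm : m ≤ p ^ 4 := (mem_filter.1 hpB).2
  have := Nat.le_of_dvd (Nat.pos_of_ne_zero hm0) hdvd
  nlinarith

open Finset in
lemma card_primeFactors_sub_three_le (m : ℕ) :
    #m.primeFactors - 3 ≤ #{u ∈ m.divisors | u ^ 4 < m} := by
  have hsplit := card_filter_add_card_filter_not (s := m.primeFactors) (fun p => p ^ 4 < m)
  simp only [not_lt] at hsplit
  have hsub : {p ∈ m.primeFactors | p ^ 4 < m} ⊆ {u ∈ m.divisors | u ^ 4 < m} := by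
    refine filter_subset_filter _ ?_
    rw [Nat.primeFactors_eq_to_filter_divisors_prime]
    exact filter_subset _ _
  have := card_le_card hsub
  have := card_primeFactors_filter_le_pow_four_le_three m
  omega

theorem squares_not_homothetic_general (m s t : ℕ)
    (hs : s ∣ m) (ht : t ∣ m) (hs0 : 0 < s) (ht0 : 0 < t) (hst : s ≠ t)
    (hs4 : s ^ 4 < m) (ht4 : t ^ 4 < m) :
    (¬ ∃ α : ℂ, α ≠ 0 ∧
        ∀ x : ℂ, x ∈ idealC m t * idealC m t ↔
          ∃ y ∈ idealC m s * idealC m s, x = α * y) ∧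
    m.primeFactors.card - 3 ≤ (m.divisors.filter (fun u => u ^ 4 < m)).card := by
  refine ⟨?_, card_primeFactors_sub_three_le m⟩
  rintro ⟨α, hα, H⟩
  have hm : 0 < m := (Nat.zero_le _).trans_lt hs4
  have h : α • (sqLattice m s : Set ℂ) = sqLattice m t := by
    ext x
    simp only [Set.mem_smul_set, SetLike.mem_coe, smul_eq_mul, ← mem_idealC_mul_self_iff hm hs,
      ← mem_idealC_mul_self_iff hm ht, H, eq_comm]
  have h' : α⁻¹ • (sqLattice m t : Set ℂ) = sqLattice m s := by rw [← h, inv_smul_smul₀ hα]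
  exact hst (Nat.dvd_antisymm (dvd_of_smul_sqLattice_eq hs0 ht0 hs4 ht4 h)
    (dvd_of_smul_sqLattice_eq ht0 hs0 ht4 hs4 h'))

/-- For `m > 1` and distinct positive divisors `s, t` of `m` with `s⁴ < m`, `t⁴ < m`,
the fractional ideals `I_s² = (s, γ_m)²` and `I_t² = (t, γ_m)²` of `ℤ[γ_m]` are not
homothetic: there is no `α ≠ 0` with `I_t² = α · I_s²`.  In particular the ideal
classes of the squares `I_s²`, for `s ∣ m` with `s⁴ < m`, are pairwise distinct, and
there are at least `ω(m) - 3` of them. -/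
theorem squares_not_homothetic (m s t : ℕ) (hm : 1 < m)
    (hs : s ∣ m) (ht : t ∣ m) (hs0 : 0 < s) (ht0 : 0 < t) (hst : s ≠ t)
    (hs4 : s ^ 4 < m) (ht4 : t ^ 4 < m) :
    (¬ ∃ α : ℂ, α ≠ 0 ∧
        ∀ x : ℂ, x ∈ idealC m t * idealC m t ↔
          ∃ y ∈ idealC m s * idealC m s, x = α * y) ∧
    m.primeFactors.card - 3 ≤ (m.divisors.filter (fun u => u ^ 4 < m)).card :=
  squares_not_homothetic_general m s t hs ht hs0 ht0 hst hs4 ht4
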